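/- arXiv:1308.2504 — 4 statements merged into one kernel-verified Lean document; each statement's English description precedes it below -/
import Mathlib

section
/- Let H be a self-adjoint operator on a Hilbert space 𝓗, let E ∈ ℝ be an eigenvalue with eigenvector Ψ, and let P be an orthogonal projection such that PΨ ≠ 0 and such that P⊥(H - E)P⊥ restricted to P⊥𝓗 is bounded invertible (where P⊥ = 1 - P). Then PΨ lies in the kernel of the Feshbach-Schur operator F_P(H - E) := P(H-E)P - P(H-E)P⊥ (P⊥(H - E)P⊥)⁻¹ P⊥(H-E)P acting on P𝓗. -/
/-- Heuristic Feshbach-Schur map: if `H` is self-adjoint, `HΨ = EΨ`, `P` is an orthogonal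
projection with `PΨ ≠ 0`, and `P⊥(H-E)P⊥` is invertible on `Ran P⊥` (with inverse `R`
supported on `Ran P⊥`), then `PΨ` lies in the kernel of
`F_P(H-E) = P(H-E)P - P(H-E)P⊥ R P⊥(H-E)P`. -/
theorem stmt7 {𝓗 : Type*} [NormedAddCommGroup 𝓗] [InnerProductSpace ℂ 𝓗] [CompleteSpace 𝓗]
    (H P : 𝓗 →L[ℂ] 𝓗) (hH : IsSelfAdjoint H) (hP : IsSelfAdjoint P) (hP2 : P * P = P)
    (E : ℝ) (Ψ : 𝓗) (hΨ : Ψ ≠ 0) (heig : H Ψ = (E : ℂ) • Ψ) (hPΨ : P Ψ ≠ 0)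
    (R : 𝓗 →L[ℂ] 𝓗)
    (hR1 : ((1 - P) * (H - (E : ℂ) • 1) * (1 - P)) * R = 1 - P)
    (hR2 : R * ((1 - P) * (H - (E : ℂ) • 1) * (1 - P)) = 1 - P)
    (hR3 : (1 - P) * R * (1 - P) = R) :
    (P * (H - (E : ℂ) • 1) * P -
      P * (H - (E : ℂ) • 1) * (1 - P) * R * (1 - P) * (H - (E : ℂ) • 1) * P) (P Ψ) = 0 := by
  set A := H - (E : ℂ) • 1 with hA
  have hAΨ : A Ψ = 0 := by
    simp [hA, ContinuousLinearMap.sub_apply, heig]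
  have hPP : P (P Ψ) = P Ψ := by
    have := congrArg (fun T : 𝓗 →L[ℂ] 𝓗 => T Ψ) hP2
    simpa using this
  have hQΨ : (1 - P) ((1 - P) Ψ) = (1 - P) Ψ := by
    simp [ContinuousLinearMap.sub_apply, hPP]
  have hAPΨ : A (P Ψ) = -(A ((1 - P) Ψ)) := by
    have h : A (P Ψ) + A ((1 - P) Ψ) = 0 := by
      rw [← map_add]
      have : P Ψ + (1 - P) Ψ = Ψ := by
        simp [ContinuousLinearMap.sub_apply]
      rw [this, hAΨ]
    linear_combination (norm := abel) h
  have key : R ((1 - P) (A (P Ψ))) = -((1 - P) Ψ) := by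
    have h2 := congrArg (fun T : 𝓗 →L[ℂ] 𝓗 => T ((1 - P) Ψ)) hR2
    simp only [ContinuousLinearMap.mul_apply] at h2
    rw [hQΨ] at h2
    rw [hAPΨ, map_neg, map_neg, h2]
  rw [ContinuousLinearMap.sub_apply]
  simp only [ContinuousLinearMap.mul_apply]
  rw [hPP, key, map_neg, hQΨ, map_neg, map_neg, hAPΨ, map_neg]
  abel
end

section
/- In the setting of the Feshbach-Schur map for a self-adjoint operator: let H be bounded self-adjoint on a Hilbert space 𝓗, E ∈ ℝ, P an orthogonal projection, P⊥ = 1 - P, and suppose P⊥(H-E)P⊥ is bounded invertible on Ran P⊥. If φ ∈ Ran P satisfies F_P(H - E)φ = 0, where F_P(H - E) = P(H-E)P - P(H-E)P⊥(P⊥(H-E)P⊥)⁻¹P⊥(H-E)P, then the vector Ψ := φ - P⊥(P⊥(H-E)P⊥)⁻¹P⊥(H-E)Pφ satisfies (H - E)Ψ = 0. Moreover Ψ = 0 only if φ = 0, since PΨ = φ. -/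
/-- Reconstruction direction of the discrete Feshbach-Schur isospectrality: if
`φ ∈ Ran P` satisfies `F_P(H-E) φ = 0`, then
`Ψ := φ - P⊥ R P⊥ (H-E) P φ` satisfies `(H-E)Ψ = 0`, and `P Ψ = φ`. -/
theorem stmt8 {𝓗 : Type*} [NormedAddCommGroup 𝓗] [InnerProductSpace ℂ 𝓗] [CompleteSpace 𝓗]
    (H P : 𝓗 →L[ℂ] 𝓗) (hH : IsSelfAdjoint H) (hP : IsSelfAdjoint P) (hP2 : P * P = P)
    (E : ℝ) (R : 𝓗 →L[ℂ] 𝓗)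
    (hR1 : ((1 - P) * (H - (E : ℂ) • 1) * (1 - P)) * R = 1 - P)
    (hR2 : R * ((1 - P) * (H - (E : ℂ) • 1) * (1 - P)) = 1 - P)
    (hR3 : (1 - P) * R * (1 - P) = R)
    (φ : 𝓗) (hφ : P φ = φ)
    (hF : (P * (H - (E : ℂ) • 1) * P -
      P * (H - (E : ℂ) • 1) * (1 - P) * R * (1 - P) * (H - (E : ℂ) • 1) * P) φ = 0) :
    (H - (E : ℂ) • 1) (φ - ((1 - P) * R * (1 - P) * (H - (E : ℂ) • 1) * P) φ) = 0 ∧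
      P (φ - ((1 - P) * R * (1 - P) * (H - (E : ℂ) • 1) * P) φ) = φ := by
  set A := H - (E : ℂ) • 1 with hA
  set Q := 1 - P with hQdef
  have hQQ : Q * Q = Q := by
    rw [hQdef]
    simp [mul_sub, sub_mul, hP2]
  set x : 𝓗 := (Q * R * Q * A * P) φ with hx
  set y : 𝓗 := (Q * A * P) φ with hy
  -- pointwise facts
  have hxy : x = Q (R y) := by
    simp [hx, hy, ContinuousLinearMap.mul_apply]
  have hQy : Q y = y := by
    have := congrArg (fun T : 𝓗 →L[ℂ] 𝓗 => T ((A * P) φ)) hQQ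
    simpa [hy, ContinuousLinearMap.mul_apply] using this
  -- P component
  have hPcomp : P (A φ) - P (A x) = 0 := by
    have := hF
    simp only [ContinuousLinearMap.sub_apply, ContinuousLinearMap.mul_apply] at this ⊢
    simp only [hx, ContinuousLinearMap.mul_apply, hφ] at this ⊢
    exact this
  -- Q component
  have hQAx : Q (A x) = y := by
    have h1 := congrArg (fun T : 𝓗 →L[ℂ] 𝓗 => T y) hR1
    simp only [ContinuousLinearMap.mul_apply] at h1
    rw [hxy]
    rw [h1, hQy]
  have hQcomp : Q (A φ) - Q (A x) = 0 := by
    rw [hQAx]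
    have : Q (A φ) = y := by
      simp [hy, ContinuousLinearMap.mul_apply, hφ]
    rw [this, sub_self]
  have hPx : P x = 0 := by
    have hPQ : P * Q = 0 := by rw [hQdef]; simp [mul_sub, hP2]
    have : P * (Q * R * Q * A * P) = 0 := by
      rw [← mul_assoc, ← mul_assoc, ← mul_assoc, ← mul_assoc, hPQ]
      simp
    have := congrArg (fun T : 𝓗 →L[ℂ] 𝓗 => T φ) this
    simpa [hx, ContinuousLinearMap.mul_apply] using this
  constructor
  · have : A (φ - x) = (P (A φ) - P (A x)) + (Q (A φ) - Q (A x)) := by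
      rw [hQdef]
      simp only [ContinuousLinearMap.sub_apply, ContinuousLinearMap.one_apply]
      rw [map_sub A φ x]
      abel
    rw [this, hPcomp, hQcomp, add_zero]
  · rw [map_sub, hφ, hPx, sub_zero]
end

section
/- Let χ and χ̄ be commuting bounded operators on a Hilbert space 𝓗 with χ² + χ̄² = 1, and let (H, T) be a Feshbach pair for χ (i.e. χT ⊆ Tχ, χ̄T ⊆ Tχ̄, T and H_{χ̄} := T + χ̄Wχ̄ are bounded invertible on D ∩ Ran χ̄ → Ran χ̄, and χ̄ H_{χ̄}⁻¹ χ̄ W χ is bounded, where W = H - T). Define Q_χ := χ - χ̄ H_{χ̄}⁻¹ χ̄ W χ and F_χ(H,T) := T + χWχ - χWχ̄ H_{χ̄}⁻¹ χ̄Wχ. Then: (i) if Hψ = 0 then F_χ(H,T)(χψ) = 0; (ii) if φ ∈ Ran χ satisfies F_χ(H,T)φ = 0 then H(Q_χ φ) = 0; and (iii) χ(Q_χ φ) = φ for φ ∈ Ker F_χ(H,T), so χ : Ker H → Ker F_χ(H,T) and Q_χ : Ker F_χ(H,T) → Ker H are mutually inverse linear isomorphisms. -/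
/-- Smooth Feshbach-Schur isospectrality (BCFS, bounded-operator setting). With
`χ² + χ̄² = 1`, `W = H - T`, `H_{χ̄} = T + χ̄Wχ̄` invertible on `Ran χ̄` (inverse `R`),
`T` invertible on `Ran χ̄` (inverse `RT`), `Q_χ = χ - χ̄ R χ̄ W χ` and
`F_χ(H,T) = T + χWχ - χWχ̄ R χ̄Wχ`: (i) `Hψ = 0 ⟹ F(χψ) = 0`; (ii) `φ ∈ Ran χ`,
`Fφ = 0 ⟹ H(Q_χ φ) = 0`; (iii) `χ(Q_χ φ) = φ` on `Ker F`; (iv) `Q_χ(χψ) = ψ` on `Ker H`. -/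
theorem stmt9 {𝓗 : Type*} [NormedAddCommGroup 𝓗] [InnerProductSpace ℂ 𝓗] [CompleteSpace 𝓗]
    (χ χb H T R RT : 𝓗 →L[ℂ] 𝓗)
    (hcomm : χ * χb = χb * χ) (hpart : χ * χ + χb * χb = 1)
    (hχ0 : χ ≠ 0) (hχb0 : χb ≠ 0)
    (hTχ : χ * T = T * χ) (hTχb : χb * T = T * χb)
    (hRT1 : ∀ x, RT (T (χb x)) = χb x) (hRT2 : ∀ x, T (RT (χb x)) = χb x)
    (hRT3 : ∀ x, ∃ y, RT (χb x) = χb y)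
    (hR1 : ∀ x, R ((T + χb * (H - T) * χb) (χb x)) = χb x)
    (hR2 : ∀ x, (T + χb * (H - T) * χb) (R (χb x)) = χb x)
    (hR3 : ∀ x, ∃ y, R (χb x) = χb y) :
    (∀ ψ : 𝓗, H ψ = 0 →
      (T + χ * (H - T) * χ - χ * (H - T) * χb * R * (χb * (H - T) * χ)) (χ ψ) = 0) ∧
    (∀ φ : 𝓗, (∃ ψ, χ ψ = φ) →
      (T + χ * (H - T) * χ - χ * (H - T) * χb * R * (χb * (H - T) * χ)) φ = 0 →
      H ((χ - χb * R * (χb * (H - T) * χ)) φ) = 0) ∧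
    (∀ φ : 𝓗,
      (T + χ * (H - T) * χ - χ * (H - T) * χb * R * (χb * (H - T) * χ)) φ = 0 →
      χ ((χ - χb * R * (χb * (H - T) * χ)) φ) = φ) ∧
    (∀ ψ : 𝓗, H ψ = 0 → (χ - χb * R * (χb * (H - T) * χ)) (χ ψ) = ψ) := by
  set W := H - T with hWdef
  have hWapp : ∀ z : 𝓗, W z = H z - T z := fun z => rfl
  have hpart' : ∀ x : 𝓗, χ (χ x) + χb (χb x) = x := by
    intro x
    have h := congrArg (fun f : 𝓗 →L[ℂ] 𝓗 => f x) hpart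
    simpa using h
  have hcomm' : ∀ x : 𝓗, χ (χb x) = χb (χ x) := by
    intro x
    have h := congrArg (fun f : 𝓗 →L[ℂ] 𝓗 => f x) hcomm
    simpa using h
  have hTχ' : ∀ x : 𝓗, χ (T x) = T (χ x) := by
    intro x
    have h := congrArg (fun f : 𝓗 →L[ℂ] 𝓗 => f x) hTχ
    simpa using h
  have hTχb' : ∀ x : 𝓗, χb (T x) = T (χb x) := by
    intro x
    have h := congrArg (fun f : 𝓗 →L[ℂ] 𝓗 => f x) hTχb
    simpa using h
  -- Key lemma for Ker H : R (χ̄ W χ (χ ψ)) = -χ̄ ψ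
  have keyKer : ∀ ψ : 𝓗, H ψ = 0 → R (χb (W (χ (χ ψ)))) = - χb ψ := by
    intro ψ hψ
    have e1 : χb (H (χb (χb ψ))) + χb (H (χ (χ ψ))) = 0 := by
      rw [← map_add, ← map_add, add_comm (χb (χb ψ)), hpart' ψ, hψ, map_zero]
    have e2 : χb (T (χb (χb ψ))) + χb (T (χ (χ ψ))) = T (χb ψ) := by
      rw [← map_add, ← map_add, add_comm (χb (χb ψ)), hpart' ψ, hTχb']
    have h1 : (T + χb * W * χb) (χb ψ) = - χb (W (χ (χ ψ))) := by
      simp only [ContinuousLinearMap.add_apply, ContinuousLinearMap.mul_apply]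
      rw [hWapp, hWapp, map_sub, map_sub]
      rw [eq_neg_of_add_eq_zero_left e1, eq_sub_of_add_eq e2]
      abel
    have h2 := hR1 ψ
    rw [h1, map_neg] at h2
    exact neg_eq_iff_eq_neg.mp h2
  -- unfolded version of hR2
  have hdagGen : ∀ x : 𝓗,
      T (R (χb x)) + χb (W (χb (R (χb x)))) = χb x := by
    intro x
    have h := hR2 x
    simpa only [ContinuousLinearMap.add_apply, ContinuousLinearMap.mul_apply] using h
  -- Key lemma for Ker F : χ (R (χ̄ W χ φ)) = -χ̄ φ
  have keyB : ∀ φ : 𝓗,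
      (T + χ * W * χ - χ * W * χb * R * (χb * W * χ)) φ = 0 →
      χ (R (χb (W (χ φ)))) = - χb φ := by
    intro φ hF
    obtain ⟨y, hy⟩ := hR3 (W (χ φ))
    have hstar : T φ + χ (W (χ φ)) - χ (W (χb (χb y))) = 0 := by
      have h := hF
      simp only [ContinuousLinearMap.sub_apply, ContinuousLinearMap.add_apply,
        ContinuousLinearMap.mul_apply] at h
      rwa [hy] at h
    have hdag : T (χb y) + χb (W (χb (χb y))) = χb (W (χ φ)) := by
      have h := hdagGen (W (χ φ))
      rwa [hy] at h
    have h3 : T φ = χ (W (χb (χb y))) - χ (W (χ φ)) :=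
      eq_sub_of_add_eq (sub_eq_zero.mp hstar)
    have h4 : χb (W (χb (χb y))) - χb (W (χ φ)) = - T (χb y) := by
      rw [← hdag]; abel
    have h5 : T (χb φ) = - T (χ (χb y)) := by
      calc T (χb φ) = χb (T φ) := (hTχb' φ).symm
        _ = χb (χ (W (χb (χb y))) - χ (W (χ φ))) := by rw [h3]
        _ = χb (χ (W (χb (χb y)))) - χb (χ (W (χ φ))) := by rw [map_sub]
        _ = χ (χb (W (χb (χb y))) - χb (W (χ φ))) := by
            rw [map_sub, ← hcomm', ← hcomm']
        _ = - χ (T (χb y)) := by rw [h4, map_neg]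
        _ = - T (χ (χb y)) := by rw [hTχ']
    have h6 : T (χb (φ + χ y)) = 0 := by
      rw [map_add χb φ (χ y), map_add T, ← hcomm', h5]
      abel
    have h7 := hRT1 (φ + χ y)
    rw [h6, map_zero] at h7
    have h8 : χb φ + χb (χ y) = 0 := by rw [← map_add]; exact h7.symm
    rw [hy, hcomm']
    exact eq_neg_of_add_eq_zero_right h8
  refine ⟨?_, ?_, ?_, ?_⟩
  · -- (i)
    intro ψ hψ
    simp only [ContinuousLinearMap.sub_apply, ContinuousLinearMap.add_apply,
      ContinuousLinearMap.mul_apply]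
    rw [keyKer ψ hψ, map_neg, map_neg, map_neg, sub_neg_eq_add]
    have hkey : χ (W (χ (χ ψ))) + χ (W (χb (χb ψ))) = - T (χ ψ) := by
      rw [← map_add, ← map_add, hpart' ψ, hWapp, hψ, zero_sub, map_neg, hTχ']
    rw [add_assoc, hkey]
    abel
  · -- (ii)
    intro φ _ hF
    obtain ⟨y, hy⟩ := hR3 (W (χ φ))
    have hstar : T φ + χ (W (χ φ)) - χ (W (χb (χb y))) = 0 := by
      have h := hF
      simp only [ContinuousLinearMap.sub_apply, ContinuousLinearMap.add_apply,
        ContinuousLinearMap.mul_apply] at h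
      rwa [hy] at h
    have hdag : T (χb y) + χb (W (χb (χb y))) = χb (W (χ φ)) := by
      have h := hdagGen (W (χ φ))
      rwa [hy] at h
    have h8 : T (χb y) = χb (W (χ φ)) - χb (W (χb (χb y))) :=
      eq_sub_of_add_eq hdag
    have hTv : T (χb (χb y)) =
        χb (χb (W (χ φ))) - χb (χb (W (χb (χb y)))) := by
      have h9 : T (χb (χb y)) = χb (T (χb y)) := (hTχb' (χb y)).symm
      rw [h9, h8, map_sub]
    have hA : W (χ φ) - χb (χb (W (χ φ))) = χ (χ (W (χ φ))) :=
      (eq_sub_of_add_eq (hpart' (W (χ φ)))).symm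
    have hB : W (χb (χb y)) - χb (χb (W (χb (χb y)))) = χ (χ (W (χb (χb y)))) :=
      (eq_sub_of_add_eq (hpart' (W (χb (χb y))))).symm
    have hC : χ (W (χ φ)) - χ (W (χb (χb y))) = - T φ := by
      rw [add_sub_assoc] at hstar
      exact eq_neg_of_add_eq_zero_right hstar
    simp only [ContinuousLinearMap.sub_apply, ContinuousLinearMap.mul_apply]
    rw [hy, map_sub]
    have hHz : ∀ z : 𝓗, H z = T z + W z := by
      intro z; rw [hWapp]; abel
    rw [hHz (χ φ), hHz (χb (χb y))]
    calc T (χ φ) + W (χ φ) - (T (χb (χb y)) + W (χb (χb y)))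
        = T (χ φ) + (W (χ φ) - χb (χb (W (χ φ))))
            - (W (χb (χb y)) - χb (χb (W (χb (χb y))))) := by
          rw [hTv]; abel
      _ = T (χ φ) + χ (χ (W (χ φ))) - χ (χ (W (χb (χb y)))) := by rw [hA, hB]
      _ = T (χ φ) + χ (χ (W (χ φ)) - χ (W (χb (χb y)))) := by rw [map_sub]; abel
      _ = T (χ φ) + χ (- T φ) := by rw [hC]
      _ = 0 := by rw [map_neg, hTχ']; abel
  · -- (iii)
    intro φ hF
    simp only [ContinuousLinearMap.sub_apply, ContinuousLinearMap.mul_apply]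
    rw [map_sub, hcomm', keyB φ hF, map_neg, sub_neg_eq_add, hpart']
  · -- (iv)
    intro ψ hψ
    simp only [ContinuousLinearMap.sub_apply, ContinuousLinearMap.mul_apply]
    rw [keyKer ψ hψ, map_neg, sub_neg_eq_add, hpart']
end

section
/- Let (Tₙ)_{n≥0} be C¹ complex-valued functions on the convex compact set B = {(r,l) ∈ [0,1]×ℝ³ : |l| ≤ r} with Tₙ(0,0) = 0, and let 0 < ρ < 1. Suppose ‖∂_r(Tₙ - ρ⁻¹ Tₙ₋₁(ρ·, ρ·))‖_∞ ≤ ε 2^{-(n-1)} and similarly for each ∂_{lⱼ} for all n ≥ 1 and some ε > 0. Then the sequence of numbers αₙ := (∂_r Tₙ)(0,0) is Cauchy, with |αₙ - αₘ| ≤ ε 2^{-(m-1)} for n > m, hence converges to some α ∈ ℂ; moreover ∂_r Tₙ → α uniformly on B, and consequently Tₙ(r,l) converges uniformly on B to α r + β·l where βⱼ = lim (∂_{lⱼ}Tₙ)(0,0). -/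
/-- The set `B = {(r, l) ∈ [0,1] × ℝ³ : ‖l‖ ≤ r}`. -/
def ballB : Set (ℝ × EuclideanSpace ℝ (Fin 3)) :=
  {x | 0 ≤ x.1 ∧ x.1 ≤ 1 ∧ ‖x.2‖ ≤ x.1}

lemma ballB_zero_mem : ((0 : ℝ), (0 : EuclideanSpace ℝ (Fin 3))) ∈ ballB := by
  simp [ballB]

lemma ballB_scale {t : ℝ} (ht0 : 0 ≤ t) (ht1 : t ≤ 1)
    {x : ℝ × EuclideanSpace ℝ (Fin 3)} (hx : x ∈ ballB) :
    (t * x.1, t • x.2) ∈ ballB := by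
  obtain ⟨h0, h1, h2⟩ := hx
  refine ⟨mul_nonneg ht0 h0, ?_, ?_⟩
  · show t * x.1 ≤ 1
    nlinarith
  · show ‖t • x.2‖ ≤ t * x.1
    rw [norm_smul, Real.norm_eq_abs, abs_of_nonneg ht0]
    exact mul_le_mul_of_nonneg_left h2 ht0

lemma ballB_norm_le {x : ℝ × EuclideanSpace ℝ (Fin 3)} (hx : x ∈ ballB) : ‖x‖ ≤ 1 := by
  obtain ⟨h0, h1, h2⟩ := hx
  rw [Prod.norm_def]
  exact max_le (by rwa [Real.norm_eq_abs, abs_of_nonneg h0]) (h2.trans h1)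

lemma ballB_convex : Convex ℝ ballB := by
  intro x hx y hy a b ha hb hab
  obtain ⟨hx0, hx1, hx2⟩ := hx
  obtain ⟨hy0, hy1, hy2⟩ := hy
  refine ⟨?_, ?_, ?_⟩
  · show 0 ≤ a * x.1 + b * y.1
    positivity
  · show a * x.1 + b * y.1 ≤ 1
    nlinarith
  · show ‖a • x.2 + b • y.2‖ ≤ a * x.1 + b * y.1
    calc ‖a • x.2 + b • y.2‖ ≤ ‖a • x.2‖ + ‖b • y.2‖ := norm_add_le _ _
      _ = a * ‖x.2‖ + b * ‖y.2‖ := by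
          rw [norm_smul, norm_smul, Real.norm_eq_abs, Real.norm_eq_abs,
            abs_of_nonneg ha, abs_of_nonneg hb]
      _ ≤ a * x.1 + b * y.1 := by gcongr

lemma ballB_isCompact : IsCompact ballB := by
  have hclosed : IsClosed ballB := by
    have h1 : IsClosed {x : ℝ × EuclideanSpace ℝ (Fin 3) | 0 ≤ x.1} :=
      isClosed_le continuous_const continuous_fst
    have h2 : IsClosed {x : ℝ × EuclideanSpace ℝ (Fin 3) | x.1 ≤ 1} :=
      isClosed_le continuous_fst continuous_const
    have h3 : IsClosed {x : ℝ × EuclideanSpace ℝ (Fin 3) | ‖x.2‖ ≤ x.1} :=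
      isClosed_le (continuous_snd.norm) continuous_fst
    exact (h1.inter (h2.inter h3))
  have hbdd : Bornology.IsBounded ballB :=
    (Metric.isBounded_closedBall (x := (0 : ℝ × EuclideanSpace ℝ (Fin 3))) (r := 1)).subset
      (fun x hx => by simpa [Metric.mem_closedBall] using ballB_norm_le hx)
  exact Metric.isCompact_of_isClosed_isBounded hclosed hbdd

lemma abs_coord_le (x : EuclideanSpace ℝ (Fin 3)) (j : Fin 3) : |x j| ≤ ‖x‖ := by
  rw [EuclideanSpace.norm_eq, ← Real.sqrt_sq_eq_abs]
  apply Real.sqrt_le_sqrt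
  have : x j ^ 2 = ‖x j‖ ^ 2 := by rw [Real.norm_eq_abs, sq_abs]
  rw [this]
  exact Finset.single_le_sum (f := fun i => ‖x i‖ ^ 2) (fun i _ => sq_nonneg _)
    (Finset.mem_univ j)

/-- Iteration of the step estimate. -/
lemma key_iter (ρ ε : ℝ) (hρ : 0 < ρ) (hρ1 : ρ < 1) (hε : 0 ≤ ε)
    (g : ℕ → ℝ × EuclideanSpace ℝ (Fin 3) → ℂ)
    (hstep : ∀ n, ∀ x ∈ ballB, ‖g (n + 1) x - g n (ρ * x.1, ρ • x.2)‖ ≤ ε * (1 / 2) ^ n) :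
    ∀ k m, ∀ r : ℝ, ∀ l : EuclideanSpace ℝ (Fin 3), (r, l) ∈ ballB →
      ‖g (m + k) (r, l) - g m (ρ ^ k * r, ρ ^ k • l)‖ ≤ ε * 2 * (1 / 2) ^ m := by
  have hsum : ∀ k m, ∀ r : ℝ, ∀ l : EuclideanSpace ℝ (Fin 3), (r, l) ∈ ballB →
      ‖g (m + k) (r, l) - g m (ρ ^ k * r, ρ ^ k • l)‖
        ≤ ε * ∑ i ∈ Finset.range k, (1 / 2 : ℝ) ^ (m + i) := by
    intro k
    induction k with
    | zero =>
      intro m r l hx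
      simp
    | succ k ih =>
      intro m r l hx
      have hφ : ((ρ * r : ℝ), ρ • l) ∈ ballB := ballB_scale hρ.le hρ1.le hx
      have h1 := hstep (m + k) (r, l) hx
      have h2 := ih m (ρ * r) (ρ • l) hφ
      have heq : (ρ ^ k * (ρ * r), ρ ^ k • (ρ • l))
          = ((ρ ^ (k + 1) * r : ℝ), ρ ^ (k + 1) • l) := by
        rw [Prod.mk.injEq]
        refine ⟨by ring, ?_⟩
        rw [smul_smul, ← pow_succ]
      rw [heq] at h2
      calc ‖g (m + (k + 1)) (r, l) - g m (ρ ^ (k + 1) * r, ρ ^ (k + 1) • l)‖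
          = ‖(g (m + k + 1) (r, l) - g (m + k) (ρ * r, ρ • l))
              + (g (m + k) (ρ * r, ρ • l)
                - g m (ρ ^ (k + 1) * r, ρ ^ (k + 1) • l))‖ := by
            rw [sub_add_sub_cancel]
            ring_nf
        _ ≤ _ := norm_add_le _ _
        _ ≤ ε * (1 / 2) ^ (m + k) + ε * ∑ i ∈ Finset.range k, (1 / 2 : ℝ) ^ (m + i) :=
            add_le_add h1 h2
        _ = ε * ∑ i ∈ Finset.range (k + 1), (1 / 2 : ℝ) ^ (m + i) := by
            rw [Finset.sum_range_succ]; ring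
  intro k m r l hx
  calc ‖g (m + k) (r, l) - g m (ρ ^ k * r, ρ ^ k • l)‖
      ≤ ε * ∑ i ∈ Finset.range k, (1 / 2 : ℝ) ^ (m + i) := hsum k m r l hx
    _ = ε * ((1 / 2) ^ m * ∑ i ∈ Finset.range k, (1 / 2 : ℝ) ^ i) := by
        simp_rw [pow_add, ← Finset.mul_sum]
    _ ≤ ε * ((1 / 2) ^ m * 2) := by
        gcongr
        exact sum_geometric_two_le _
    _ = ε * 2 * (1 / 2) ^ m := by ring

noncomputable def Lmap (α : ℂ) (β : Fin 3 → ℂ) : (ℝ × EuclideanSpace ℝ (Fin 3)) →L[ℝ] ℂ :=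
  α • (Complex.ofRealCLM.comp (ContinuousLinearMap.fst ℝ ℝ (EuclideanSpace ℝ (Fin 3)))) +
  ∑ j : Fin 3, β j • (Complex.ofRealCLM.comp ((EuclideanSpace.proj j).comp
    (ContinuousLinearMap.snd ℝ ℝ (EuclideanSpace ℝ (Fin 3)))))

lemma Lmap_apply (α : ℂ) (β : Fin 3 → ℂ) (x : ℝ × EuclideanSpace ℝ (Fin 3)) :
    Lmap α β x = α * (x.1 : ℂ) + ∑ j : Fin 3, β j * ((x.2 j : ℝ) : ℂ) := by
  simp [Lmap, ContinuousLinearMap.sum_apply, mul_comm]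

lemma Lmap_fst (α : ℂ) (β : Fin 3 → ℂ) :
    Lmap α β ((1 : ℝ), (0 : EuclideanSpace ℝ (Fin 3))) = α := by
  rw [Lmap_apply]
  simp

lemma Lmap_single (α : ℂ) (β : Fin 3 → ℂ) (j : Fin 3) :
    Lmap α β ((0 : ℝ), EuclideanSpace.single j (1 : ℝ)) = β j := by
  rw [Lmap_apply]
  simp only [EuclideanSpace.single_apply]
  rw [Finset.sum_eq_single j] <;> simp +contextual

lemma component (ρ ε : ℝ) (hρ : 0 < ρ) (hρ1 : ρ < 1) (hε : 0 < ε)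
    (g : ℕ → ℝ × EuclideanSpace ℝ (Fin 3) → ℂ)
    (hg : ∀ n, ContinuousOn (g n) ballB)
    (hstep : ∀ n, ∀ x ∈ ballB, ‖g (n + 1) x - g n (ρ * x.1, ρ • x.2)‖ ≤ ε * (1 / 2) ^ n) :
    ∃ c : ℂ,
      Filter.Tendsto (fun n => g n ((0 : ℝ), (0 : EuclideanSpace ℝ (Fin 3))))
        Filter.atTop (nhds c) ∧
      TendstoUniformlyOn (fun n x => g n x) (fun _ => c) Filter.atTop ballB ∧
      ∀ m n : ℕ, m ≤ n →
        ‖g n ((0 : ℝ), (0 : EuclideanSpace ℝ (Fin 3)))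
          - g m ((0 : ℝ), (0 : EuclideanSpace ℝ (Fin 3)))‖ ≤ ε * 2 * (1 / 2) ^ m := by
  have key := key_iter ρ ε hρ hρ1 hε.le g hstep
  -- behavior at origin
  have hO : ∀ m n : ℕ, m ≤ n →
      ‖g n ((0 : ℝ), (0 : EuclideanSpace ℝ (Fin 3)))
        - g m ((0 : ℝ), (0 : EuclideanSpace ℝ (Fin 3)))‖ ≤ ε * 2 * (1 / 2) ^ m := by
    intro m n hmn
    have h := key (n - m) m 0 0 ballB_zero_mem
    have hm : m + (n - m) = n := by omega
    rw [hm] at h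
    simpa using h
  have hcauchy : CauchySeq (fun n => g n ((0 : ℝ), (0 : EuclideanSpace ℝ (Fin 3)))) := by
    apply cauchySeq_of_le_geometric (1 / 2) (ε * 2) (by norm_num)
    intro n
    rw [dist_eq_norm, norm_sub_rev]
    exact hO n (n + 1) (by omega)
  obtain ⟨c, hc⟩ := cauchySeq_tendsto_of_complete hcauchy
  have hcb : ∀ m : ℕ,
      ‖g m ((0 : ℝ), (0 : EuclideanSpace ℝ (Fin 3))) - c‖ ≤ ε * 2 * (1 / 2) ^ m := by
    intro m
    have htend : Filter.Tendsto
        (fun n => ‖g n ((0 : ℝ), (0 : EuclideanSpace ℝ (Fin 3)))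
          - g m ((0 : ℝ), (0 : EuclideanSpace ℝ (Fin 3)))‖) Filter.atTop
        (nhds ‖c - g m ((0 : ℝ), (0 : EuclideanSpace ℝ (Fin 3)))‖) :=
      (hc.sub_const _).norm
    have hle := le_of_tendsto htend
      (Filter.eventually_atTop.2 ⟨m, fun n hn => hO m n hn⟩)
    rwa [norm_sub_rev] at hle
  refine ⟨c, hc, ?_, hO⟩
  rw [Metric.tendstoUniformlyOn_iff]
  intro η hη
  -- choose m
  have htend0 : Filter.Tendsto (fun m : ℕ => ε * 2 * (1 / 2 : ℝ) ^ m) Filter.atTop (nhds 0) := by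
    simpa using (tendsto_pow_atTop_nhds_zero_of_lt_one (r := (1/2 : ℝ)) (by norm_num) (by norm_num)).const_mul
      (ε * 2)
  obtain ⟨m, hm⟩ := (htend0.eventually (gt_mem_nhds (by positivity : (0 : ℝ) < η / 3))).exists
  -- uniform continuity of g m on ballB
  have hUC : UniformContinuousOn (g m) ballB :=
    ballB_isCompact.uniformContinuousOn_of_continuous (hg m)
  obtain ⟨δ, hδ0, hδ⟩ := (Metric.uniformContinuousOn_iff.1 hUC) (η / 3) (by positivity)
  obtain ⟨K, hK⟩ := exists_pow_lt_of_lt_one (x := δ) (y := ρ) hδ0 hρ1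
  filter_upwards [Filter.eventually_ge_atTop (m + K)] with n hn
  intro x hx
  set k := n - m with hk
  have hmk : m + k = n := by omega
  have hKk : K ≤ k := by omega
  set y : ℝ × EuclideanSpace ℝ (Fin 3) := (ρ ^ k * x.1, ρ ^ k • x.2) with hy
  have hyB : y ∈ ballB := ballB_scale (pow_nonneg hρ.le _)
    (pow_le_one₀ hρ.le hρ1.le) hx
  have h1 : ‖g n x - g m y‖ ≤ ε * 2 * (1 / 2) ^ m := by
    have := key k m x.1 x.2 hx
    rw [hmk] at this
    simpa using this
  have hynorm : dist y ((0 : ℝ), (0 : EuclideanSpace ℝ (Fin 3))) < δ := by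
    have : ‖y‖ ≤ ρ ^ k := by
      rw [hy, Prod.norm_def]
      apply max_le
      · rw [Real.norm_eq_abs, abs_mul, abs_of_nonneg (pow_nonneg hρ.le _)]
        calc ρ ^ k * |x.1| ≤ ρ ^ k * 1 := by
              gcongr
              rw [abs_of_nonneg hx.1]; exact hx.2.1
          _ = ρ ^ k := mul_one _
      · rw [norm_smul, Real.norm_eq_abs, abs_of_nonneg (pow_nonneg hρ.le _)]
        calc ρ ^ k * ‖x.2‖ ≤ ρ ^ k * 1 := by
              gcongr
              exact hx.2.2.trans hx.2.1
          _ = ρ ^ k := mul_one _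
    have hkK : ρ ^ k ≤ ρ ^ K := pow_le_pow_of_le_one hρ.le hρ1.le hKk
    have h00 : ((0 : ℝ), (0 : EuclideanSpace ℝ (Fin 3)))
        = (0 : ℝ × EuclideanSpace ℝ (Fin 3)) := rfl
    calc dist y ((0 : ℝ), (0 : EuclideanSpace ℝ (Fin 3))) = ‖y‖ := by
          rw [h00, dist_zero_right]
      _ ≤ ρ ^ k := this
      _ ≤ ρ ^ K := hkK
      _ < δ := hK
  have h2 : dist (g m y) (g m ((0 : ℝ), (0 : EuclideanSpace ℝ (Fin 3)))) < η / 3 :=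
    hδ y hyB _ ballB_zero_mem hynorm
  calc dist c (g n x) = ‖g n x - c‖ := by rw [dist_comm, dist_eq_norm]
    _ = ‖(g n x - g m y) + ((g m y - g m ((0 : ℝ), (0 : EuclideanSpace ℝ (Fin 3))))
        + (g m ((0 : ℝ), (0 : EuclideanSpace ℝ (Fin 3))) - c))‖ := by
        congr 1; ring
    _ ≤ ‖g n x - g m y‖ + (‖g m y - g m ((0 : ℝ), (0 : EuclideanSpace ℝ (Fin 3)))‖
        + ‖g m ((0 : ℝ), (0 : EuclideanSpace ℝ (Fin 3))) - c‖) :=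
        (norm_add_le _ _).trans (by gcongr; exact norm_add_le _ _)
    _ < η / 3 + (η / 3 + η / 3) := by
        have := hcb m
        rw [dist_eq_norm] at h2
        gcongr
        · exact lt_of_le_of_lt h1 hm
        · exact lt_of_le_of_lt this hm
    _ = η := by ring

/-- Convergence to the fixed-point manifold (Lemma 4.5): `C¹` functions `Tₙ` on `B` with
`Tₙ(0,0) = 0` whose derivatives satisfy
`‖∂(Tₙ - ρ⁻¹Tₙ₋₁(ρ·,ρ·))‖_∞ ≤ ε 2^{-(n-1)}` in each of the four directions. Then the
numbers `(∂_r Tₙ)(0,0)` form a Cauchy sequence with `|αₙ - αₘ| ≤ ε 2^{-(m-1)}`,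
converging to `α`; `∂_r Tₙ → α` uniformly on `B`; and `Tₙ(r,l) → α r + β·l` uniformly
on `B`, where `βⱼ = lim (∂_{lⱼ}Tₙ)(0,0)`. -/
theorem stmt17 (ρ ε : ℝ) (hρ : 0 < ρ) (hρ1 : ρ < 1) (hε : 0 < ε)
    (T : ℕ → ℝ × EuclideanSpace ℝ (Fin 3) → ℂ)
    (D : ℕ → ℝ × EuclideanSpace ℝ (Fin 3) → (ℝ × EuclideanSpace ℝ (Fin 3)) →L[ℝ] ℂ)
    (hT0 : ∀ n, T n ((0 : ℝ), (0 : EuclideanSpace ℝ (Fin 3))) = 0)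
    (hderiv : ∀ n, ∀ x ∈ ballB, HasFDerivWithinAt (T n) (D n x) ballB x)
    (hcont : ∀ n, ContinuousOn (fun x => D n x) ballB)
    (hr : ∀ n : ℕ, ∀ x ∈ ballB,
      ‖D (n + 1) x (1, 0) - D n (ρ * x.1, ρ • x.2) (1, 0)‖ ≤ ε * (1 / 2) ^ n)
    (hl : ∀ n : ℕ, ∀ j : Fin 3, ∀ x ∈ ballB,
      ‖D (n + 1) x (0, EuclideanSpace.single j (1 : ℝ))
          - D n (ρ * x.1, ρ • x.2) (0, EuclideanSpace.single j (1 : ℝ))‖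
        ≤ ε * (1 / 2) ^ n) :
    (∀ m n : ℕ, m < n →
      ‖D n ((0 : ℝ), (0 : EuclideanSpace ℝ (Fin 3))) (1, 0)
          - D m ((0 : ℝ), (0 : EuclideanSpace ℝ (Fin 3))) (1, 0)‖ ≤ ε * 2 * (1 / 2) ^ m) ∧
    CauchySeq (fun n => D n ((0 : ℝ), (0 : EuclideanSpace ℝ (Fin 3))) (1, 0)) ∧
    ∃ α : ℂ, ∃ β : Fin 3 → ℂ,
      Filter.Tendsto (fun n => D n ((0 : ℝ), (0 : EuclideanSpace ℝ (Fin 3))) (1, 0))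
        Filter.atTop (nhds α) ∧
      (∀ j : Fin 3,
        Filter.Tendsto
          (fun n => D n ((0 : ℝ), (0 : EuclideanSpace ℝ (Fin 3)))
            (0, EuclideanSpace.single j (1 : ℝ)))
          Filter.atTop (nhds (β j))) ∧
      TendstoUniformlyOn (fun n x => D n x (1, 0)) (fun _ => α) Filter.atTop ballB ∧
      TendstoUniformlyOn (fun n x => T n x)
        (fun x => α * (x.1 : ℂ) + ∑ j, β j * ((x.2 j : ℝ) : ℂ)) Filter.atTop ballB := by
  have hgc : ∀ (v : ℝ × EuclideanSpace ℝ (Fin 3)) (n : ℕ),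
      ContinuousOn (fun x => D n x v) ballB := fun v n =>
    (ContinuousLinearMap.apply ℝ ℂ v).continuous.comp_continuousOn (hcont n)
  obtain ⟨α, hαlim, hαunif, hαbound⟩ := component ρ ε hρ hρ1 hε
    (fun n x => D n x ((1 : ℝ), (0 : EuclideanSpace ℝ (Fin 3)))) (hgc _) hr
  have hβex : ∀ j : Fin 3, ∃ c : ℂ,
      Filter.Tendsto (fun n => D n ((0 : ℝ), (0 : EuclideanSpace ℝ (Fin 3)))
        ((0 : ℝ), EuclideanSpace.single j (1 : ℝ))) Filter.atTop (nhds c) ∧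
      TendstoUniformlyOn (fun n x => D n x ((0 : ℝ), EuclideanSpace.single j (1 : ℝ)))
        (fun _ => c) Filter.atTop ballB ∧
      ∀ m n : ℕ, m ≤ n →
        ‖D n ((0 : ℝ), (0 : EuclideanSpace ℝ (Fin 3)))
            ((0 : ℝ), EuclideanSpace.single j (1 : ℝ))
          - D m ((0 : ℝ), (0 : EuclideanSpace ℝ (Fin 3)))
            ((0 : ℝ), EuclideanSpace.single j (1 : ℝ))‖ ≤ ε * 2 * (1 / 2) ^ m := fun j =>
    component ρ ε hρ hρ1 hε
      (fun n x => D n x ((0 : ℝ), EuclideanSpace.single j (1 : ℝ))) (hgc _) (hl · j)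
  choose β hβlim hβunif _hβbound using hβex
  refine ⟨fun m n hmn => hαbound m n hmn.le, hαlim.cauchySeq, α, β, hαlim, hβlim, hαunif, ?_⟩
  rw [Metric.tendstoUniformlyOn_iff]
  intro η hη
  have h8 : (0 : ℝ) < η / 8 := by positivity
  rw [Metric.tendstoUniformlyOn_iff] at hαunif
  have hβunif' : ∀ j, ∀ᶠ n in Filter.atTop, ∀ x ∈ ballB,
      dist (β j) (D n x ((0 : ℝ), EuclideanSpace.single j (1 : ℝ))) < η / 8 := fun j => by
    have := hβunif j
    rw [Metric.tendstoUniformlyOn_iff] at this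
    exact this (η / 8) h8
  filter_upwards [hαunif (η / 8) h8, Filter.eventually_all.2 hβunif'] with n h1 h2
  intro x hx
  -- operator norm bound
  have hop : ∀ y ∈ ballB, ‖D n y - Lmap α β‖ ≤ η / 2 := by
    intro y hy
    apply ContinuousLinearMap.opNorm_le_bound _ (by positivity)
    intro v
    have hv2 : ∑ j : Fin 3, v.2 j • EuclideanSpace.single j (1 : ℝ) = v.2 := by
      simpa [EuclideanSpace.basisFun_apply, EuclideanSpace.basisFun_repr] using
        (EuclideanSpace.basisFun (Fin 3) ℝ).sum_repr v.2
    have hv : v = v.1 • ((1 : ℝ), (0 : EuclideanSpace ℝ (Fin 3)))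
        + ∑ j : Fin 3, v.2 j • ((0 : ℝ), EuclideanSpace.single j (1 : ℝ)) := by
      apply Prod.ext
      · simp [Prod.fst_sum]
      · simp [Prod.snd_sum, hv2]
    set w := D n y - Lmap α β with hw
    have hw1 : ‖w ((1 : ℝ), (0 : EuclideanSpace ℝ (Fin 3)))‖ ≤ η / 8 := by
      rw [hw, ContinuousLinearMap.sub_apply, Lmap_fst]
      have := h1 y hy
      rw [dist_comm, dist_eq_norm] at this
      exact this.le
    have hwj : ∀ j : Fin 3, ‖w ((0 : ℝ), EuclideanSpace.single j (1 : ℝ))‖ ≤ η / 8 := by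
      intro j
      rw [hw, ContinuousLinearMap.sub_apply, Lmap_single]
      have := h2 j y hy
      rw [dist_comm, dist_eq_norm] at this
      exact this.le
    calc ‖w v‖ = ‖v.1 • w ((1 : ℝ), (0 : EuclideanSpace ℝ (Fin 3)))
          + ∑ j : Fin 3, v.2 j • w ((0 : ℝ), EuclideanSpace.single j (1 : ℝ))‖ := by
          conv_lhs => rw [hv]
          rw [map_add, map_smul, map_sum]
          congr 2
          exact Finset.sum_congr rfl fun j _ => map_smul w _ _
      _ ≤ ‖v.1 • w ((1 : ℝ), (0 : EuclideanSpace ℝ (Fin 3)))‖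
          + ∑ j : Fin 3, ‖v.2 j • w ((0 : ℝ), EuclideanSpace.single j (1 : ℝ))‖ :=
          (norm_add_le _ _).trans (by gcongr; exact norm_sum_le _ _)
      _ ≤ ‖v‖ * (η / 8) + ∑ _j : Fin 3, ‖v‖ * (η / 8) := by
          gcongr with j hj
          · rw [norm_smul]
            exact mul_le_mul (norm_fst_le v) (hw1) (norm_nonneg _) (norm_nonneg _)
          · rw [norm_smul]
            apply mul_le_mul _ (hwj j) (norm_nonneg _) (norm_nonneg _)
            exact (abs_coord_le v.2 j).trans (norm_snd_le v)
      _ = η / 2 * ‖v‖ := by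
          rw [Finset.sum_const]
          simp
          ring
  have hmvt := ballB_convex.norm_image_sub_le_of_norm_hasFDerivWithin_le
    (f := fun y => T n y - Lmap α β y) (f' := fun y => D n y - Lmap α β)
    (fun y hy => (hderiv n y hy).sub ((Lmap α β).hasFDerivWithinAt)) hop
    ballB_zero_mem hx
  have hmvt' : ‖T n x - Lmap α β x‖ ≤ η / 2 * ‖x‖ := by
    have hT0' : T n (0 : ℝ × EuclideanSpace ℝ (Fin 3)) = 0 := hT0 n
    simpa [hT0', Lmap_apply, Prod.mk_zero_zero] using hmvt
  calc dist (α * (x.1 : ℂ) + ∑ j, β j * ((x.2 j : ℝ) : ℂ)) (T n x)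
      = ‖T n x - Lmap α β x‖ := by rw [dist_comm, dist_eq_norm, Lmap_apply]
    _ ≤ η / 2 * ‖x‖ := hmvt'
    _ ≤ η / 2 * 1 := by gcongr; exact ballB_norm_le hx
    _ < η := by linarith
end
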